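/- Tail mutual information vanishes (Lemma 7): let X be a real random variable and Z ~ N(0, σ²), σ > 0, independent of X, with I(X; X+Z) < ∞. Then P(|X| > b)·I(X; X+Z given |X| > b) → 0 as b → ∞, where I(X; X+Z | |X| > b) denotes the mutual information computed under the conditional law given the event {|X| > b}. -/

import Mathlib

/-!
Write `Y = X + Z`, `ν` for the law of `(X, Y)`, `i = log dν/d(P_X ⊗ P_Y)` for the information
density and `A_b = {|X| > b}`. Conditioning on `A_b` restricts `ν` to `{|x| > b} × ℝ` and rescales
it by `P(A_b)⁻¹`; comparing Radon–Nikodym derivatives gives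
`P(A_b) · I(X; Y | A_b) = ∫_{|x| > b} i dν - P(A_b) · D(P_{Y | A_b} ‖ P_Y)`.
Since `P_{Y | A_b} ≤ P(A_b)⁻¹ • P_Y`, the divergence lies in `[0, -log P(A_b)]`, and both
`∫_{|x| > b} i dν` (as `i ∈ L¹(ν)`) and `P(A_b) log P(A_b)` tend to `0`. The Gaussian noise
enters through `ν ≪ P_X ⊗ P_Y`, which holds because the law of `Z` is quasi-invariant under
translations.
-/

open MeasureTheory ProbabilityTheory Real

/-- Mutual information (natural log) between two random variables, as the relative entropy
of the joint law with respect to the product of the marginals. -/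
noncomputable def miNat {Ω α β : Type*} [MeasurableSpace Ω] [MeasurableSpace α]
    [MeasurableSpace β] (μ : Measure Ω) (X : Ω → α) (Y : Ω → β) : ℝ :=
  ∫ p, Real.log
      (((μ.map fun ω => (X ω, Y ω)).rnDeriv ((μ.map X).prod (μ.map Y)) p).toReal)
    ∂(μ.map fun ω => (X ω, Y ω))

open Set Filter Topology
open scoped ENNReal NNReal

namespace MeasureTheory.Measure

variable {α β : Type*} [MeasurableSpace α] [MeasurableSpace β]

lemma rnDeriv_le_of_le_smul {μ ν : Measure α} [SigmaFinite ν] {c : ℝ≥0∞} (h : μ ≤ c • ν) :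
    μ.rnDeriv ν ≤ᵐ[ν] fun _ ↦ c := by
  refine ae_le_of_forall_setLIntegral_le_of_sigmaFinite (measurable_rnDeriv μ ν) fun s hs _ ↦ ?_
  calc ∫⁻ x in s, μ.rnDeriv ν x ∂ν ≤ μ s := setLIntegral_rnDeriv_le s
    _ ≤ c * ν s := h s
    _ = ∫⁻ _ in s, c ∂ν := (setLIntegral_const s c).symm

variable {ν : Measure (α × β)} {μ : Measure α} {ρ q : Measure β} {T : Set α}

lemma restrict_prod_eq_withDensity [SFinite μ] [SigmaFinite ρ] [SigmaFinite q]
    (hT : MeasurableSet T) (hqρ : q ≪ ρ) :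
    (μ.restrict T).prod q
      = (μ.prod ρ).withDensity fun p ↦ T.indicator 1 p.1 * q.rnDeriv ρ p.2 := by
  rw [← withDensity_indicator_one hT, ← withDensity_rnDeriv_eq q ρ hqρ,
    prod_withDensity (measurable_one.indicator hT) (measurable_rnDeriv q ρ),
    withDensity_rnDeriv_eq q ρ hqρ]

lemma measure_prod_setOf_rnDeriv_eq_zero [SigmaFinite ρ] [SigmaFinite q] (hqρ : q ≪ ρ)
    (hνq : (ν.restrict (T ×ˢ univ)).map Prod.snd ≪ q) :
    ν (T ×ˢ {y | q.rnDeriv ρ y = 0}) = 0 := by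
  have hN : MeasurableSet {y | q.rnDeriv ρ y = 0} :=
    measurable_rnDeriv q ρ (measurableSet_singleton 0)
  have hqN : q {y | q.rnDeriv ρ y = 0} = 0 := by
    simpa [pos_iff_ne_zero] using ae_iff.mp (rnDeriv_pos hqρ)
  have := hνq hqN
  rwa [map_apply measurable_snd hN, restrict_apply (measurable_snd hN), ← univ_prod,
    prod_inter_prod, univ_inter, inter_univ] at this

lemma restrict_prod_univ_eq_withDensity [SigmaFinite ν] [SigmaFinite μ] [SigmaFinite ρ]
    [SigmaFinite q] (hν : ν ≪ μ.prod ρ) (hT : MeasurableSet T) (hqρ : q ≪ ρ)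
    (hνq : (ν.restrict (T ×ˢ univ)).map Prod.snd ≪ q) :
    ν.restrict (T ×ˢ univ) = ((μ.restrict T).prod q).withDensity
      fun p ↦ ν.rnDeriv (μ.prod ρ) p * (q.rnDeriv ρ p.2)⁻¹ := by
  set d := ν.rnDeriv (μ.prod ρ)
  set r := q.rnDeriv ρ
  have hr : Measurable r := measurable_rnDeriv q ρ
  have hS : MeasurableSet (T ×ˢ (univ : Set β)) := hT.prod .univ
  have hr_fin : ∀ᵐ p ∂μ.prod ρ, r p.2 ≠ ∞ :=
    quasiMeasurePreserving_snd.ae ((rnDeriv_lt_top q ρ).mono fun _ h ↦ h.ne)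
  -- `ν` does not charge `T × {r = 0}`, so neither does its density there
  have hd_zero : ∀ᵐ p ∂μ.prod ρ, p ∈ T ×ˢ {y | r y = 0} → d p = 0 := by
    have hTN : MeasurableSet (T ×ˢ {y | r y = 0}) := hT.prod (hr (measurableSet_singleton 0))
    refine (setLIntegral_eq_zero_iff hTN (measurable_rnDeriv ν _)).mp (le_antisymm ?_ zero_le)
    exact (setLIntegral_rnDeriv_le _).trans_eq (measure_prod_setOf_rnDeriv_eq_zero hqρ hνq)
  have hdensity : (fun p ↦ T.indicator 1 p.1 * r p.2) * (fun p ↦ d p * (r p.2)⁻¹)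
      =ᵐ[μ.prod ρ] (T ×ˢ univ).indicator d := by
    filter_upwards [hr_fin, hd_zero] with p hp_fin hp_zero
    by_cases hpT : p.1 ∈ T
    · have hpS : p ∈ T ×ˢ (univ : Set β) := ⟨hpT, trivial⟩
      by_cases hr0 : r p.2 = 0
      · simp [hpS, hp_zero ⟨hpT, hr0⟩]
      · simp only [Pi.mul_apply, indicator_of_mem hpT, indicator_of_mem hpS, Pi.one_apply, one_mul]
        rw [mul_left_comm, ENNReal.mul_inv_cancel hr0 hp_fin, mul_one]
    · simp [hpT]
  have hk : Measurable fun p : α × β ↦ T.indicator 1 p.1 * r p.2 :=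
    ((measurable_one.indicator hT).comp measurable_fst).mul (hr.comp measurable_snd)
  have hh : Measurable fun p ↦ d p * (r p.2)⁻¹ :=
    (measurable_rnDeriv ν _).mul (hr.comp measurable_snd).inv
  rw [restrict_prod_eq_withDensity hT hqρ, ← withDensity_mul _ hk hh,
    withDensity_congr_ae hdensity, withDensity_indicator hS, ← restrict_withDensity hS,
    withDensity_rnDeriv_eq ν _ hν]

lemma llr_restrict_prod_univ [SigmaFinite ν] [SigmaFinite μ] [SigmaFinite ρ] [SigmaFinite q]
    (hν : ν ≪ μ.prod ρ) (hT : MeasurableSet T) (hqρ : q ≪ ρ)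
    (hνq : (ν.restrict (T ×ˢ univ)).map Prod.snd ≪ q) :
    llr (ν.restrict (T ×ˢ univ)) ((μ.restrict T).prod q)
      =ᵐ[ν.restrict (T ×ˢ univ)] fun p ↦ llr ν (μ.prod ρ) p - llr q ρ p.2 := by
  have hdensity := restrict_prod_univ_eq_withDensity hν hT hqρ hνq
  have hh : Measurable fun p ↦ ν.rnDeriv (μ.prod ρ) p * (q.rnDeriv ρ p.2)⁻¹ :=
    (measurable_rnDeriv ν _).mul ((measurable_rnDeriv q ρ).comp measurable_snd).inv
  have h_rn : (ν.restrict (T ×ˢ univ)).rnDeriv ((μ.restrict T).prod q)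
      =ᵐ[ν.restrict (T ×ˢ univ)] fun p ↦ ν.rnDeriv (μ.prod ρ) p * (q.rnDeriv ρ p.2)⁻¹ := by
    rw [hdensity]
    exact (withDensity_absolutelyContinuous _ _).ae_le (rnDeriv_withDensity _ hh)
  have h_d : ∀ᵐ p ∂ν.restrict (T ×ˢ univ),
      0 < ν.rnDeriv (μ.prod ρ) p ∧ ν.rnDeriv (μ.prod ρ) p < ∞ :=
    ae_restrict_of_ae ((rnDeriv_pos hν).and (hν.ae_le (rnDeriv_lt_top ν _)))
  have h_r : ∀ᵐ p ∂ν.restrict (T ×ˢ univ), 0 < q.rnDeriv ρ p.2 ∧ q.rnDeriv ρ p.2 < ∞ :=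
    ae_of_ae_map measurable_snd.aemeasurable
      (hνq.ae_le ((rnDeriv_pos hqρ).and (hqρ.ae_le (rnDeriv_lt_top q ρ))))
  filter_upwards [h_rn, h_d, h_r] with p hp_rn ⟨hd_pos, hd_fin⟩ ⟨hr_pos, hr_fin⟩
  rw [llr, hp_rn, ENNReal.toReal_mul, ENNReal.toReal_inv, log_mul, log_inv, llr, llr,
    sub_eq_add_neg]
  · exact (ENNReal.toReal_pos hd_pos.ne' hd_fin.ne).ne'
  · exact inv_ne_zero (ENNReal.toReal_pos hr_pos.ne' hr_fin.ne).ne'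

end MeasureTheory.Measure

namespace MeasureTheory

variable {β : Type*} [MeasurableSpace β] {q ρ : Measure β} {c : ℝ≥0∞}

lemma integrable_llr_of_le_smul [IsFiniteMeasure q] [IsFiniteMeasure ρ] (hqρ : q ≪ ρ)
    (hc : c ≠ ∞) (h : q ≤ c • ρ) : Integrable (llr q ρ) q := by
  rw [← integrable_rnDeriv_mul_log_iff hqρ]
  obtain ⟨C, hC⟩ := isCompact_Icc.exists_bound_of_continuousOn
    (s := Icc 0 c.toReal) continuous_mul_log.continuousOn
  refine Integrable.of_bound (by fun_prop) C ?_
  filter_upwards [Measure.rnDeriv_le_of_le_smul h] with y hy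
  exact hC _ ⟨ENNReal.toReal_nonneg, ENNReal.toReal_mono hc hy⟩

lemma integral_llr_le_log_of_le_smul [IsProbabilityMeasure q] [IsFiniteMeasure ρ] (hqρ : q ≪ ρ)
    (hc : c ≠ ∞) (h : q ≤ c • ρ) : ∫ y, llr q ρ y ∂q ≤ log c.toReal := by
  calc ∫ y, llr q ρ y ∂q ≤ ∫ _, log c.toReal ∂q := by
        refine integral_mono_ae (integrable_llr_of_le_smul hqρ hc h) (integrable_const _) ?_
        filter_upwards [hqρ.ae_le (Measure.rnDeriv_le_of_le_smul h), Measure.rnDeriv_pos hqρ]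
          with y hy hpos
        exact log_le_log (ENNReal.toReal_pos hpos.ne' (ne_top_of_le_ne_top hc hy))
          (ENNReal.toReal_mono hc hy)
    _ = log c.toReal := by simp

lemma tendsto_setIntegral_setOf_lt_atTop {E F : Type*} [MeasurableSpace E]
    [NormedAddCommGroup F] [NormedSpace ℝ F] {ν : Measure E} {g : E → ℝ} (hg : Measurable g)
    {f : E → F} (hf : Integrable f ν) : Tendsto (fun b ↦ ∫ x in {x | b < g x}, f x ∂ν) atTop (𝓝 0) := by
  have hempty : ⋂ b : ℝ, {x | b < g x} = ∅ :=
    eq_empty_of_forall_notMem fun x hx ↦ lt_irrefl (g x) (mem_iInter.mp hx (g x))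
  simpa [hempty] using tendsto_setIntegral_of_antitone
    (fun b ↦ measurableSet_lt measurable_const hg) (fun b c hbc x (hx : c < g x) ↦ hbc.trans_lt hx)
    ⟨0, hf.integrableOn⟩

end MeasureTheory

namespace ProbabilityTheory

variable {Ω α β : Type*} [MeasurableSpace Ω] [MeasurableSpace α] [MeasurableSpace β]

noncomputable def informationDensity (μ : Measure Ω) (X : Ω → α) (Y : Ω → β) : α × β → ℝ :=
  llr (μ.map fun ω ↦ (X ω, Y ω)) ((μ.map X).prod (μ.map Y))

lemma miNat_eq_integral_informationDensity (μ : Measure Ω) (X : Ω → α) (Y : Ω → β) :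
    miNat μ X Y = ∫ p, informationDensity μ X Y p ∂μ.map fun ω ↦ (X ω, Y ω) :=
  rfl

lemma map_cond_preimage (μ : Measure Ω) {f : Ω → α} (hf : Measurable f) {s : Set α}
    (hs : MeasurableSet s) : μ[|f ⁻¹' s].map f = (μ (f ⁻¹' s))⁻¹ • (μ.map f).restrict s := by
  rw [cond, Measure.map_smul, Measure.restrict_map hf hs]

lemma map_cond_le_smul_map (μ : Measure Ω) {f : Ω → α} (hf : Measurable f) (s : Set Ω) :
    μ[|s].map f ≤ (μ s)⁻¹ • μ.map f := by
  rw [cond, Measure.map_smul]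
  gcongr
  exact Measure.restrict_le_self

lemma map_cond_absolutelyContinuous_map (μ : Measure Ω) {f : Ω → α} (hf : Measurable f)
    (s : Set Ω) : μ[|s].map f ≪ μ.map f :=
  Measure.absolutelyContinuous_of_le_smul (map_cond_le_smul_map μ hf s)

lemma integrable_llr_map_cond (μ : Measure Ω) [IsFiniteMeasure μ] {f : Ω → α}
    (hf : Measurable f) {s : Set Ω} (hs : μ s ≠ 0) :
    Integrable (llr (μ[|s].map f) (μ.map f)) (μ[|s].map f) :=
  integrable_llr_of_le_smul (map_cond_absolutelyContinuous_map μ hf s)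
    (ENNReal.inv_ne_top.mpr hs) (map_cond_le_smul_map μ hf s)

variable {μ : Measure Ω} {X : Ω → α} {Y : Ω → β} {T : Set α}

lemma map_prodMk_cond_preimage_fst (hX : Measurable X) (hY : Measurable Y)
    (hT : MeasurableSet T) :
    μ[|X ⁻¹' T].map (fun ω ↦ (X ω, Y ω))
      = (μ (X ⁻¹' T))⁻¹ • (μ.map fun ω ↦ (X ω, Y ω)).restrict (T ×ˢ univ) := by
  have hpre : (fun ω ↦ (X ω, Y ω)) ⁻¹' (T ×ˢ univ) = X ⁻¹' T := by
    simp [mk_preimage_prod]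
  simpa only [hpre] using map_cond_preimage μ (hX.prodMk hY) (hT.prod .univ)

lemma informationDensity_cond_preimage_fst [IsFiniteMeasure μ] (hX : Measurable X)
    (hY : Measurable Y) (hac : μ.map (fun ω ↦ (X ω, Y ω)) ≪ (μ.map X).prod (μ.map Y))
    (hT : MeasurableSet T) (hP : μ (X ⁻¹' T) ≠ 0) :
    informationDensity μ[|X ⁻¹' T] X Y =ᵐ[μ[|X ⁻¹' T].map fun ω ↦ (X ω, Y ω)]
      fun p ↦ informationDensity μ X Y p - llr (μ[|X ⁻¹' T].map Y) (μ.map Y) p.2 := by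
  have hP_inv : (μ (X ⁻¹' T))⁻¹ ≠ 0 := ENNReal.inv_ne_zero.mpr (measure_ne_top _ _)
  have hjoint := map_prodMk_cond_preimage_fst (μ := μ) hX hY hT
  have hsnd : μ[|X ⁻¹' T].map Y
      = (μ (X ⁻¹' T))⁻¹ • ((μ.map fun ω ↦ (X ω, Y ω)).restrict (T ×ˢ univ)).map Prod.snd := by
    rw [← Measure.map_smul, ← hjoint, Measure.map_map measurable_snd (hX.prodMk hY)]
    rfl
  have hνq : ((μ.map fun ω ↦ (X ω, Y ω)).restrict (T ×ˢ univ)).map Prod.snd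
      ≪ μ[|X ⁻¹' T].map Y := hsnd ▸ Measure.absolutelyContinuous_smul hP_inv
  have hqY := map_cond_absolutelyContinuous_map μ hY (X ⁻¹' T)
  have hac_restrict : (μ.map fun ω ↦ (X ω, Y ω)).restrict (T ×ˢ univ)
      ≪ ((μ.map X).restrict T).prod (μ[|X ⁻¹' T].map Y) := by
    rw [Measure.restrict_prod_univ_eq_withDensity hac hT hqY hνq]
    exact withDensity_absolutelyContinuous _ _
  rw [informationDensity, informationDensity, hjoint, map_cond_preimage μ hX hT,
    Measure.prod_smul_left]
  refine Measure.smul_absolutelyContinuous.ae_le ?_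
  filter_upwards [llr_smul_same hac_restrict _ hP_inv (ENNReal.inv_ne_top.mpr hP),
    Measure.llr_restrict_prod_univ hac hT hqY hνq] with p h_smul h_restrict
  rw [h_smul, h_restrict]

lemma toReal_mul_miNat_cond_preimage_fst [IsFiniteMeasure μ] (hX : Measurable X)
    (hY : Measurable Y) (hac : μ.map (fun ω ↦ (X ω, Y ω)) ≪ (μ.map X).prod (μ.map Y))
    (hint : Integrable (informationDensity μ X Y) (μ.map fun ω ↦ (X ω, Y ω)))
    (hT : MeasurableSet T) :
    (μ (X ⁻¹' T)).toReal * miNat μ[|X ⁻¹' T] X Y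
      = (∫ p in T ×ˢ univ, informationDensity μ X Y p ∂μ.map fun ω ↦ (X ω, Y ω))
        - (μ (X ⁻¹' T)).toReal
          * ∫ y, llr (μ[|X ⁻¹' T].map Y) (μ.map Y) y ∂μ[|X ⁻¹' T].map Y := by
  have hXY : Measurable fun ω ↦ (X ω, Y ω) := hX.prodMk hY
  by_cases hP : μ (X ⁻¹' T) = 0
  · have hS : (μ.map fun ω ↦ (X ω, Y ω)) (T ×ˢ univ) = 0 := by
      rwa [Measure.map_apply hXY (hT.prod .univ), mk_preimage_prod, preimage_univ, inter_univ]
    simp [hP, Measure.restrict_eq_zero.mpr hS]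
  have hP_inv : (μ (X ⁻¹' T))⁻¹ ≠ ∞ := ENNReal.inv_ne_top.mpr hP
  have hjoint := map_prodMk_cond_preimage_fst (μ := μ) hX hY hT
  have hsnd : (μ[|X ⁻¹' T].map fun ω ↦ (X ω, Y ω)).map Prod.snd = μ[|X ⁻¹' T].map Y := by
    rw [Measure.map_map measurable_snd hXY]
    rfl
  have hint_cond : Integrable (informationDensity μ X Y)
      (μ[|X ⁻¹' T].map fun ω ↦ (X ω, Y ω)) := by
    rw [hjoint]
    exact hint.restrict.smul_measure hP_inv
  have hint_snd : Integrable (fun p : α × β ↦ llr (μ[|X ⁻¹' T].map Y) (μ.map Y) p.2)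
      (μ[|X ⁻¹' T].map fun ω ↦ (X ω, Y ω)) := by
    refine Integrable.comp_measurable (g := llr (μ[|X ⁻¹' T].map Y) (μ.map Y)) ?_ measurable_snd
    rw [hsnd]
    exact integrable_llr_map_cond μ hY hP
  have hmi : miNat μ[|X ⁻¹' T] X Y
      = (μ (X ⁻¹' T))⁻¹.toReal
          * (∫ p in T ×ˢ univ, informationDensity μ X Y p ∂μ.map fun ω ↦ (X ω, Y ω))
        - ∫ y, llr (μ[|X ⁻¹' T].map Y) (μ.map Y) y ∂μ[|X ⁻¹' T].map Y := by
    rw [miNat_eq_integral_informationDensity,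
      integral_congr_ae (informationDensity_cond_preimage_fst hX hY hac hT hP),
      integral_sub hint_cond hint_snd, ← hsnd,
      integral_map measurable_snd.aemeasurable (measurable_llr _ _).aestronglyMeasurable,
      hjoint, integral_smul_measure, smul_eq_mul]
  rw [hmi, mul_sub, ← mul_assoc, ENNReal.toReal_inv,
    mul_inv_cancel₀ (ENNReal.toReal_ne_zero.mpr ⟨hP, measure_ne_top _ _⟩), one_mul]

lemma miNat_cond_preimage_fst_bounds [IsProbabilityMeasure μ] (hX : Measurable X)
    (hY : Measurable Y) (hac : μ.map (fun ω ↦ (X ω, Y ω)) ≪ (μ.map X).prod (μ.map Y))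
    (hint : Integrable (informationDensity μ X Y) (μ.map fun ω ↦ (X ω, Y ω)))
    (hT : MeasurableSet T) :
    (∫ p in T ×ˢ univ, informationDensity μ X Y p ∂μ.map fun ω ↦ (X ω, Y ω))
        + (μ (X ⁻¹' T)).toReal * log (μ (X ⁻¹' T)).toReal
      ≤ (μ (X ⁻¹' T)).toReal * miNat μ[|X ⁻¹' T] X Y
    ∧ (μ (X ⁻¹' T)).toReal * miNat μ[|X ⁻¹' T] X Y
      ≤ ∫ p in T ×ˢ univ, informationDensity μ X Y p ∂μ.map fun ω ↦ (X ω, Y ω) := by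
  rw [toReal_mul_miNat_cond_preimage_fst hX hY hac hint hT]
  by_cases hP : μ (X ⁻¹' T) = 0
  · simp [hP]
  have := cond_isProbabilityMeasure (μ := μ) hP
  have := Measure.isProbabilityMeasure_map (μ := μ[|X ⁻¹' T]) hY.aemeasurable
  have := Measure.isProbabilityMeasure_map (μ := μ) hY.aemeasurable
  have hqY := map_cond_absolutelyContinuous_map μ hY (X ⁻¹' T)
  have hK_nonneg : 0 ≤ ∫ y, llr (μ[|X ⁻¹' T].map Y) (μ.map Y) y ∂μ[|X ⁻¹' T].map Y := by
    simpa using InformationTheory.integral_llr_add_sub_measure_univ_nonneg hqY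
      (integrable_llr_map_cond μ hY hP)
  have hK_le : ∫ y, llr (μ[|X ⁻¹' T].map Y) (μ.map Y) y ∂μ[|X ⁻¹' T].map Y
      ≤ -log (μ (X ⁻¹' T)).toReal := by
    rw [← log_inv, ← ENNReal.toReal_inv]
    exact integral_llr_le_log_of_le_smul hqY (ENNReal.inv_ne_top.mpr hP)
      (map_cond_le_smul_map μ hY _)
  constructor
  · nlinarith [ENNReal.toReal_nonneg (a := μ (X ⁻¹' T))]
  · nlinarith [ENNReal.toReal_nonneg (a := μ (X ⁻¹' T))]

section AdditiveNoise

variable {G : Type*} [AddGroup G] [MeasurableSpace G] [MeasurableAdd₂ G]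
  {μ γ : Measure G} [SFinite γ]

lemma measure_preimage_const_add_eq_zero [NeZero μ] (hγ : ∀ x, γ.map (x + ·) ≪ γ)
    {s : Set G} (hs : MeasurableSet s) (h : (μ.prod γ).map (fun p ↦ p.1 + p.2) s = 0) (x : G) :
    γ ((x + ·) ⁻¹' s) = 0 := by
  rw [Measure.map_apply measurable_add hs, Measure.prod_apply (measurable_add hs),
    lintegral_eq_zero_iff (measurable_measure_prodMk_left (measurable_add hs))] at h
  obtain ⟨y, hy⟩ := h.exists
  have hshift : (x + ·) ⁻¹' s = (-y + x + ·) ⁻¹' ((y + ·) ⁻¹' s) := by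
    ext z
    simp [add_assoc]
  rw [hshift, ← Measure.map_apply (measurable_const_add _) (measurable_const_add y hs)]
  exact hγ _ hy

lemma map_prod_add_absolutelyContinuous [SFinite μ] [NeZero μ] (hγ : ∀ x, γ.map (x + ·) ≪ γ) :
    (μ.prod γ).map (fun p ↦ (p.1, p.1 + p.2))
      ≪ μ.prod ((μ.prod γ).map fun p ↦ p.1 + p.2) := by
  have hg : Measurable fun p : G × G ↦ (p.1, p.1 + p.2) := measurable_fst.prodMk measurable_add
  refine Measure.AbsolutelyContinuous.mk fun E hE h ↦ ?_
  rw [Measure.prod_apply hE, lintegral_eq_zero_iff (measurable_measure_prodMk_left hE)] at h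
  rw [Measure.map_apply hg hE, Measure.prod_apply (hg hE),
    lintegral_eq_zero_iff (measurable_measure_prodMk_left (hg hE))]
  filter_upwards [h] with x hx
  exact measure_preimage_const_add_eq_zero hγ (measurable_prodMk_left hE) hx x

end AdditiveNoise

lemma gaussianReal_map_const_add_absolutelyContinuous (m : ℝ) {v : ℝ≥0} (hv : v ≠ 0) (x : ℝ) :
    (gaussianReal m v).map (x + ·) ≪ gaussianReal m v := by
  rw [gaussianReal_map_const_add]
  exact (gaussianReal_absolutelyContinuous _ hv).trans (gaussianReal_absolutelyContinuous' _ hv)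

lemma map_prodMk_add_absolutelyContinuous {Ω G : Type*} [MeasurableSpace Ω] [AddGroup G]
    [MeasurableSpace G] [MeasurableAdd₂ G] {μ : Measure Ω} [IsProbabilityMeasure μ]
    {X Z : Ω → G} (hX : Measurable X) (hZ : Measurable Z) (hXZ : IndepFun X Z μ)
    (hZ_shift : ∀ x, (μ.map Z).map (x + ·) ≪ μ.map Z) :
    μ.map (fun ω ↦ (X ω, X ω + Z ω)) ≪ (μ.map X).prod (μ.map fun ω ↦ X ω + Z ω) := by
  have := Measure.isProbabilityMeasure_map (μ := μ) hX.aemeasurable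
  have hjoint : μ.map (fun ω ↦ (X ω, Z ω)) = (μ.map X).prod (μ.map Z) :=
    (indepFun_iff_map_prod_eq_prod_map_map hX.aemeasurable hZ.aemeasurable).mp hXZ
  have hsum : μ.map (fun ω ↦ X ω + Z ω) = (μ.map fun ω ↦ (X ω, Z ω)).map fun p ↦ p.1 + p.2 := by
    rw [Measure.map_map measurable_add (hX.prodMk hZ)]
    rfl
  have hpair : μ.map (fun ω ↦ (X ω, X ω + Z ω))
      = (μ.map fun ω ↦ (X ω, Z ω)).map fun p ↦ (p.1, p.1 + p.2) := by
    rw [Measure.map_map (measurable_fst.prodMk measurable_add) (hX.prodMk hZ)]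
    rfl
  rw [hpair, hsum, hjoint]
  exact map_prod_add_absolutelyContinuous hZ_shift

end ProbabilityTheory

/-- Lemma 7 (tail mutual information vanishes): for `X` a real random variable and
`Z ~ N(0, σ²)` independent of `X` with `I(X; X+Z) < ∞`,
`P(|X| > b)·I(X; X+Z | |X| > b) → 0` as `b → ∞`, where the conditional mutual information
is computed under the law conditioned on the event `{|X| > b}`. -/
theorem tail_mutual_information_vanishes
    {Ω : Type*} [MeasureSpace Ω] [IsProbabilityMeasure (ℙ : Measure Ω)]
    (X Z : Ω → ℝ) (hX : Measurable X) (hZ : Measurable Z)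
    (σ : NNReal) (hσ : 0 < σ)
    (hZlaw : Measure.map Z ℙ = gaussianReal 0 (σ ^ 2))
    (hIndep : IndepFun X Z ℙ)
    (hFin : Integrable
      (fun p => Real.log
        ((((ℙ : Measure Ω).map fun ω => (X ω, X ω + Z ω)).rnDeriv
          (((ℙ : Measure Ω).map X).prod ((ℙ : Measure Ω).map fun ω => X ω + Z ω)) p).toReal))
      ((ℙ : Measure Ω).map fun ω => (X ω, X ω + Z ω))) :
    Filter.Tendsto
      (fun b : ℝ =>
        (ℙ {ω | b < |X ω|}).toReal *
          miNat (ℙ[|{ω | b < |X ω|}]) X (fun ω => X ω + Z ω))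
      Filter.atTop (nhds 0) := by
  have hY : Measurable fun ω ↦ X ω + Z ω := hX.add hZ
  have hac := map_prodMk_add_absolutelyContinuous hX hZ hIndep
    (hZlaw ▸ gaussianReal_map_const_add_absolutelyContinuous 0 (pow_ne_zero 2 hσ.ne'))
  have hbounds := fun b : ℝ ↦ miNat_cond_preimage_fst_bounds hX hY hac hFin
    (measurableSet_lt measurable_const continuous_abs.measurable : MeasurableSet {x | b < |x|})
  have htail := tendsto_setIntegral_setOf_lt_atTop
    (f := informationDensity ℙ X fun ω ↦ X ω + Z ω) measurable_fst.abs hFin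
  have hprob := tendsto_setIntegral_setOf_lt_atTop (ν := ℙ) hX.abs (integrable_const (1 : ℝ))
  simp only [setIntegral_const, measureReal_def, smul_eq_mul, mul_one] at hprob
  have hprob_log := (continuous_mul_log.tendsto 0).comp hprob
  simp only [prod_univ] at hbounds
  refine tendsto_of_tendsto_of_tendsto_of_le_of_le ?_ htail (fun b ↦ (hbounds b).1)
    (fun b ↦ (hbounds b).2)
  simpa using htail.add hprob_log
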